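/- Let f : ℝ² → ℝ be three times continuously differentiable with ‖D³f(x)‖ ≤ C₃ for all x ∈ ℝ². Consider the degree-one graph filter response at a grid point p with grid spacing h, given by F_h(g)(p) = (α₀ + α₁)g(p) − (α₁/4)Σ_{e∈{±e₁,±e₂}} g(p + h e) for real coefficients α₀, α₁. Then for any rotation angle γ, the equivariance gap between the filter applied to the image rotated by γ around p and the filter applied to the original image is bounded by |((α₀ + α₁)f(p) − (α₁/4)Σ_{e∈{±e₁,±e₂}} f(p + h R_γ e)) − ((α₀ + α₁)f(p) − (α₁/4)Σ_{e∈{±e₁,±e₂}} f(p + h e))| ≤ (|α₁|/3)·C₃·h³, where R_γ is the rotation of ℝ² by angle γ. -/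

import Mathlib

/-!
Along a direction `v`, Taylor's formula with Lagrange remainder for `t ↦ f (p + t • v)` shows that
the symmetric second difference `f (p + h v) + f (p - h v) - 2 f p` is `h² D²f(p)(v, v)` up to
`C₃ |h|³ ‖v‖³ / 3`, the odd-order terms cancelling. For any bilinear form, `B(u, u) + B(w, w)` is
the same for the rotated frame `u = (cos γ, sin γ)`, `w = (-sin γ, cos γ)` as for `e₁, e₂`, so the
second-order terms cancel in the equivariance gap, which is `α₁ / 4` times a combination of four
remainders.
-/

open Set

section

variable {E F : Type*} [NormedAddCommGroup E] [NormedSpace ℝ E]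
  [NormedAddCommGroup F] [NormedSpace ℝ F]

theorem iteratedDeriv_comp_add_smul {n : WithTop ℕ∞} {f : E → F} (hf : ContDiff ℝ n f)
    (p v : E) {k : ℕ} (hk : k ≤ n) (t : ℝ) :
    iteratedDeriv k (fun t : ℝ ↦ f (p + t • v)) t = iteratedFDeriv ℝ k f (p + t • v) fun _ ↦ v := by
  have hcomp : (fun t : ℝ ↦ f (p + t • v)) =
      (fun x ↦ f (p + x)) ∘ ContinuousLinearMap.smulRight (1 : ℝ →L[ℝ] ℝ) v := by
    ext t; simp
  have hshift : ContDiff ℝ n fun x ↦ f (p + x) := hf.comp (contDiff_const.add contDiff_id)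
  rw [iteratedDeriv_eq_iteratedFDeriv, hcomp,
    ContinuousLinearMap.iteratedFDeriv_comp_right _ hshift _ hk,
    ContinuousMultilinearMap.compContinuousLinearMap_apply, iteratedFDeriv_comp_add_left]
  simp

theorem abs_sub_taylor_two_le {f : E → ℝ} (hf : ContDiff ℝ 3 f) {C : ℝ}
    (hC : ∀ x, ‖iteratedFDeriv ℝ 3 f x‖ ≤ C) (p v : E) :
    |f (p + v) - f p - fderiv ℝ f p v - fderiv ℝ (fderiv ℝ f) p v v / 2| ≤ C * ‖v‖ ^ 3 / 6 := by
  set g : ℝ → ℝ := fun t ↦ f (p + t • v)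
  have hg : ∀ k ≤ 3, ∀ t, iteratedDeriv k g t = iteratedFDeriv ℝ k f (p + t • v) fun _ ↦ v :=
    fun k hk ↦ iteratedDeriv_comp_add_smul hf p v (by exact_mod_cast hk)
  have hgC : ContDiff ℝ 3 g := hf.comp (contDiff_const.add (contDiff_id.smul contDiff_const))
  obtain ⟨t, -, ht⟩ := taylor_mean_remainder_lagrange_iteratedDeriv (n := 2) zero_ne_one
    hgC.contDiffOn
  have htaylor : taylorWithinEval g 2 (uIcc 0 1) 0 1 =
      f p + fderiv ℝ f p v + fderiv ℝ (fderiv ℝ f) p v v / 2 := by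
    have hwithin : ∀ k ≤ 3, iteratedDerivWithin k g (uIcc 0 1) 0 =
        iteratedFDeriv ℝ k f p fun _ ↦ v := fun k hk ↦ by
      rw [iteratedDerivWithin_eq_iteratedDeriv (uniqueDiffOn_uIcc zero_ne_one)
        (hgC.contDiffAt.of_le (by exact_mod_cast hk)) left_mem_uIcc, hg k hk, zero_smul, add_zero]
    simp only [taylor_within_apply, Finset.sum_range_succ, Finset.sum_range_zero,
      hwithin 0 (by norm_num), hwithin 1 (by norm_num), hwithin 2 (by norm_num),
      iteratedFDeriv_zero_apply, iteratedFDeriv_one_apply, iteratedFDeriv_two_apply]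
    norm_num
    ring
  have hremainder : |iteratedDeriv 3 g t| ≤ C * ‖v‖ ^ 3 := by
    rw [hg 3 le_rfl, ← Real.norm_eq_abs]
    exact (ContinuousMultilinearMap.le_opNorm_mul_pow_of_le _ (pi_norm_const_le v)).trans
      (by gcongr; exact hC _)
  calc _ = |g 1 - taylorWithinEval g 2 (uIcc 0 1) 0 1| := by
        rw [htaylor]; simp only [g, one_smul]; ring_nf
    _ = |iteratedDeriv 3 g t| / 6 := by rw [ht]; norm_num [Nat.factorial, abs_div]
    _ ≤ C * ‖v‖ ^ 3 / 6 := by gcongr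

theorem abs_second_difference_sub_le {f : E → ℝ} (hf : ContDiff ℝ 3 f) {C : ℝ}
    (hC : ∀ x, ‖iteratedFDeriv ℝ 3 f x‖ ≤ C) (p v : E) :
    |f (p + v) + f (p - v) - 2 * f p - fderiv ℝ (fderiv ℝ f) p v v| ≤ C * ‖v‖ ^ 3 / 3 := by
  have hplus := abs_sub_taylor_two_le hf hC p v
  have hminus := abs_sub_taylor_two_le hf hC p (-v)
  simp only [← sub_eq_add_neg, map_neg, neg_apply, neg_neg, norm_neg] at hminus
  calc _ = |(f (p + v) - f p - fderiv ℝ f p v - fderiv ℝ (fderiv ℝ f) p v v / 2) +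
        (f (p - v) - f p - -fderiv ℝ f p v - fderiv ℝ (fderiv ℝ f) p v v / 2)| := by ring_nf
    _ ≤ C * ‖v‖ ^ 3 / 6 + C * ‖v‖ ^ 3 / 6 := (abs_add_le _ _).trans (add_le_add hplus hminus)
    _ = C * ‖v‖ ^ 3 / 3 := by ring

theorem LinearMap.apply_rotation_add_apply_rotation {R M N : Type*} [CommRing R] [AddCommGroup M]
    [Module R M] [AddCommGroup N] [Module R N] (B : M →ₗ[R] M →ₗ[R] N) (x y : M) {c s : R}
    (hcs : s ^ 2 + c ^ 2 = 1) :
    B (c • x + s • y) (c • x + s • y) + B (-s • x + c • y) (-s • x + c • y) = B x x + B y y := by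
  simp only [map_add, map_smul, LinearMap.add_apply, LinearMap.smul_apply]
  linear_combination (norm := module) hcs • (B x x + B y y)

theorem abs_stencil_sum_sub_le {f : E → ℝ} (hf : ContDiff ℝ 3 f) {C : ℝ}
    (hC : ∀ x, ‖iteratedFDeriv ℝ 3 f x‖ ≤ C) (p : E) {u w x y : E}
    (hu : ‖u‖ ≤ 1) (hw : ‖w‖ ≤ 1) (hx : ‖x‖ ≤ 1) (hy : ‖y‖ ≤ 1)
    (hB : fderiv ℝ (fderiv ℝ f) p u u + fderiv ℝ (fderiv ℝ f) p w w =
      fderiv ℝ (fderiv ℝ f) p x x + fderiv ℝ (fderiv ℝ f) p y y) (h : ℝ) :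
    |(f (p + h • u) + f (p - h • u) + f (p + h • w) + f (p - h • w)) -
      (f (p + h • x) + f (p - h • x) + f (p + h • y) + f (p - h • y))| ≤ 4 * (C * |h| ^ 3 / 3) := by
  have hunit : ∀ z : E, ‖z‖ ≤ 1 →
      |f (p + h • z) + f (p - h • z) - 2 * f p - h ^ 2 * fderiv ℝ (fderiv ℝ f) p z z| ≤
        C * |h| ^ 3 / 3 := fun z hz ↦ by
    have hC0 : 0 ≤ C := (norm_nonneg _).trans (hC p)
    have hsecond := abs_second_difference_sub_le hf hC p (h • z)
    simp only [map_smul, smul_apply, smul_eq_mul, norm_smul, Real.norm_eq_abs] at hsecond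
    refine (le_of_eq_of_le (by ring_nf) hsecond).trans ?_
    have hz3 : ‖z‖ ^ 3 ≤ 1 := pow_le_one₀ (norm_nonneg z) hz
    rw [mul_pow]
    gcongr
    exact mul_le_of_le_one_right (by positivity) hz3
  have hBh := congrArg (h ^ 2 * ·) hB
  simp only [mul_add] at hBh
  obtain ⟨hu₁, hu₂⟩ := abs_le.mp (hunit u hu)
  obtain ⟨hw₁, hw₂⟩ := abs_le.mp (hunit w hw)
  obtain ⟨hx₁, hx₂⟩ := abs_le.mp (hunit x hx)
  obtain ⟨hy₁, hy₂⟩ := abs_le.mp (hunit y hy)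
  exact abs_le.mpr ⟨by linarith, by linarith⟩

end

theorem EuclideanSpace.norm_smul_single_zero_add_smul_single_one (a b : ℝ) :
    ‖a • EuclideanSpace.single (0 : Fin 2) (1 : ℝ) + b • EuclideanSpace.single 1 1‖ =
      √(a ^ 2 + b ^ 2) := by
  simp [EuclideanSpace.norm_eq, Fin.sum_univ_two]

open EuclideanSpace in
/-- For a three times continuously differentiable image signal `f : ℝ² → ℝ` with
uniformly bounded third derivative, the equivariance gap of the degree-one graph filter
`α₀ I + α₁ L` under a rotation of the sampling stencil by angle `γ` around `p` is bounded
by `(|α₁|/3) C₃ h³`.  Here `R_γ e₁ = (cos γ, sin γ)` and `R_γ e₂ = (−sin γ, cos γ)`. -/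
theorem degree_one_filter_rotation_equivariance_gap
    (f : EuclideanSpace ℝ (Fin 2) → ℝ) (C₃ : ℝ)
    (hf : ContDiff ℝ 3 f)
    (hbound : ∀ x, ‖iteratedFDeriv ℝ 3 f x‖ ≤ C₃)
    (α₀ α₁ : ℝ) (γ : ℝ) (p : EuclideanSpace ℝ (Fin 2)) (h : ℝ) (hh : 0 < h) :
    |((α₀ + α₁) * f p
        - (α₁ / 4) *
          (f (p + h • (Real.cos γ • single (0 : Fin 2) (1 : ℝ) + Real.sin γ • single (1 : Fin 2) (1 : ℝ)))
            + f (p - h • (Real.cos γ • single (0 : Fin 2) (1 : ℝ) + Real.sin γ • single (1 : Fin 2) (1 : ℝ)))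
            + f (p + h • (-Real.sin γ • single (0 : Fin 2) (1 : ℝ) + Real.cos γ • single (1 : Fin 2) (1 : ℝ)))
            + f (p - h • (-Real.sin γ • single (0 : Fin 2) (1 : ℝ) + Real.cos γ • single (1 : Fin 2) (1 : ℝ)))))
      - ((α₀ + α₁) * f p
        - (α₁ / 4) *
          (f (p + h • single (0 : Fin 2) (1 : ℝ)) + f (p - h • single (0 : Fin 2) (1 : ℝ))
            + f (p + h • single (1 : Fin 2) (1 : ℝ)) + f (p - h • single (1 : Fin 2) (1 : ℝ))))|
      ≤ (|α₁| / 3) * C₃ * h ^ 3 := by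
  have hrotated : ∀ a b : ℝ, a ^ 2 + b ^ 2 = 1 →
      ‖a • single (0 : Fin 2) (1 : ℝ) + b • single 1 1‖ ≤ 1 :=
    fun a b hab ↦ by rw [norm_smul_single_zero_add_smul_single_one, hab, Real.sqrt_one]
  have hstencil := abs_stencil_sum_sub_le hf hbound p
    (hrotated _ _ (Real.cos_sq_add_sin_sq γ))
    (hrotated _ _ (by rw [neg_sq, Real.sin_sq_add_cos_sq])) (by simp) (by simp)
    ((fderiv ℝ (fderiv ℝ f) p).toLinearMap₁₂.apply_rotation_add_apply_rotation _ _
      (Real.sin_sq_add_cos_sq γ)) h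
  have hgap := mul_le_mul_of_nonneg_left hstencil (abs_nonneg (-(α₁ / 4)))
  rw [← abs_mul] at hgap
  refine le_of_eq_of_le ?_ (hgap.trans_eq ?_)
  · congr 1
    ring
  · rw [abs_neg, abs_div, abs_of_pos hh, abs_of_pos (four_pos : (0 : ℝ) < 4)]
    ring
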